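/- MMJ distance to a newly added point (Corollary 1): for a point p ∉ Ω and r ∈ {1,…,N}, MMJ(p, Ω_r | Ω ∪ {p}) = min over t ∈ {1,…,N} of max( d(p, Ω_t), MMJ(Ω_t, Ω_r | Ω) ). -/

import Mathlib

/-- The maximum jump (distance between consecutive points) along a list of points. -/
def maxJump {α : Type*} (d : α → α → ℝ) : List α → ℝ
  | a :: b :: l => max (d a b) (maxJump d (b :: l))
  | _ => 0

/-- `L` is a path from `i` to `j` all of whose points lie in `S`. -/
def IsPathIn {α : Type*} (S : Set α) (i j : α) (L : List α) : Prop :=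
  L.head? = some i ∧ L.getLast? = some j ∧ ∀ x ∈ L, x ∈ S

/-- Min-Max-Jump distance between `i` and `j` under the context `S`. -/
noncomputable def MMJ {α : Type*} (d : α → α → ℝ) (S : Set α) (i j : α) : ℝ :=
  sInf {m : ℝ | ∃ L : List α, IsPathIn S i j L ∧ maxJump d L = m}

/-!
A path from `p` to `Ω r` inside `Ω ∪ {p}` can be cut at its last visit of `p`: what remains is a
jump from `p` to some `Ω t` followed by a path inside `Ω`, and cutting off a prefix does not
increase the maximal jump. Conversely, prepending `p` to a path from `Ω t` to `Ω r` inside `Ω`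
only adds the jump `d p (Ω t)`.
-/

section MaxJump

variable {α : Type*} (d : α → α → ℝ)

theorem maxJump_nonneg : ∀ L : List α, 0 ≤ maxJump d L
  | _ :: _ :: l => le_max_of_le_right (maxJump_nonneg (_ :: l))
  | [_] | [] => le_rfl

theorem maxJump_le_maxJump_cons (a : α) : ∀ L : List α, maxJump d L ≤ maxJump d (a :: L)
  | [] => le_rfl
  | _ :: _ => le_max_right _ _

theorem maxJump_le_maxJump_append (L₁ L₂ : List α) : maxJump d L₂ ≤ maxJump d (L₁ ++ L₂) := by
  induction L₁ with
  | nil => exact le_rfl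
  | cons a L₁ ih => exact ih.trans (maxJump_le_maxJump_cons d a _)

end MaxJump

theorem List.exists_cons_isSuffix_of_forall_mem_union_singleton {α : Type*} {S : Set α} {p : α} :
    ∀ {L : List α}, (∀ x ∈ L, x ∈ S ∪ {p}) → p ∈ L → ∃ B, p :: B <:+ L ∧ ∀ x ∈ B, x ∈ S
  | [], _, hp => absurd hp List.not_mem_nil
  | a :: L, hL, hp => by
    by_cases hpL : p ∈ L
    · obtain ⟨B, hB, hBS⟩ :=
        exists_cons_isSuffix_of_forall_mem_union_singleton (fun x hx => hL x (.tail a hx)) hpL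
      exact ⟨B, hB.trans (List.suffix_cons a L), hBS⟩
    · obtain rfl : p = a := by simpa [hpL] using hp
      refine ⟨L, List.suffix_refl _, fun x hx => ?_⟩
      obtain hxS | rfl := hL x (.tail p hx)
      · exact hxS
      · exact absurd hx hpL

section MMJ

variable {α : Type*} {d : α → α → ℝ} {S T : Set α} {i j : α}

theorem isPathIn_pair (hi : i ∈ S) (hj : j ∈ S) : IsPathIn S i j [i, j] :=
  ⟨rfl, rfl, by simp [hi, hj]⟩

theorem MMJ_le_maxJump {L : List α} (h : IsPathIn S i j L) : MMJ d S i j ≤ maxJump d L :=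
  csInf_le ⟨0, fun _ ⟨L, _, hL⟩ => hL ▸ maxJump_nonneg d L⟩ ⟨L, h, rfl⟩

theorem le_MMJ {b : ℝ} (hi : i ∈ S) (hj : j ∈ S) (h : ∀ L, IsPathIn S i j L → b ≤ maxJump d L) :
    b ≤ MMJ d S i j :=
  le_csInf ⟨_, _, isPathIn_pair hi hj, rfl⟩ fun _ ⟨L, hL, hm⟩ => hm ▸ h L hL

theorem exists_isPathIn_maxJump_lt {c : ℝ} (hi : i ∈ S) (hj : j ∈ S) (h : MMJ d S i j < c) :
    ∃ L, IsPathIn S i j L ∧ maxJump d L < c := by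
  by_contra! hc
  exact (le_MMJ hi hj hc).not_gt h

theorem MMJ_le_max_MMJ_of_subset (hST : S ⊆ T) {x y : α} (hx : x ∈ T) (hy : y ∈ S) (hj : j ∈ S) :
    MMJ d T x j ≤ max (d x y) (MMJ d S y j) := by
  refine le_of_forall_gt fun c hc => ?_
  obtain ⟨L, ⟨hhead, hlast, hLS⟩, hLc⟩ :=
    exists_isPathIn_maxJump_lt hy hj (lt_of_le_of_lt (le_max_right _ _) hc)
  obtain ⟨L, rfl⟩ : ∃ L', L = y :: L' := by
    cases L with
    | nil => simp at hhead
    | cons a L => exact ⟨L, by simpa using hhead⟩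
  have hpath : IsPathIn T x j (x :: y :: L) := by
    refine ⟨rfl, by simpa [List.getLast?_cons_cons] using hlast, ?_⟩
    simp only [List.mem_cons, forall_eq_or_imp] at hLS ⊢
    exact ⟨hx, hST hLS.1, fun z hz => hST (hLS.2 z hz)⟩
  calc MMJ d T x j ≤ max (d x y) (maxJump d (y :: L)) := MMJ_le_maxJump hpath
    _ < c := max_lt (lt_of_le_of_lt (le_max_left _ _) hc) hLc

end MMJ

theorem le_MMJ_union_singleton {α : Type*} [PseudoMetricSpace α] {S : Set α} {p j : α} {b : ℝ}
    (hj : j ∈ S) (hb : ∀ y ∈ S, b ≤ max (dist p y) (MMJ dist S y j)) :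
    b ≤ MMJ dist (S ∪ {p}) p j := by
  refine le_MMJ (Or.inr rfl) (Or.inl hj) fun L ⟨hhead, hlast, hL⟩ => ?_
  obtain ⟨B, ⟨A, rfl⟩, hBS⟩ :=
    List.exists_cons_isSuffix_of_forall_mem_union_singleton hL (List.mem_of_mem_head? hhead)
  rw [List.getLast?_append_cons] at hlast
  refine le_trans ?_ (maxJump_le_maxJump_append dist A (p :: B))
  cases B with
  | nil =>
    obtain rfl : p = j := by simpa using hlast
    calc b ≤ max (dist p p) (MMJ dist S p p) := hb p hj
      _ ≤ max 0 (maxJump dist [p]) := by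
        rw [dist_self]
        exact max_le_max le_rfl (MMJ_le_maxJump ⟨rfl, rfl, by simpa using hj⟩)
      _ = maxJump dist [p] := max_self 0
  | cons y B =>
    have hyB : IsPathIn S y j (y :: B) :=
      ⟨rfl, by simpa [List.getLast?_cons_cons] using hlast, hBS⟩
    calc b ≤ max (dist p y) (MMJ dist S y j) := hb y (hBS y List.mem_cons_self)
      _ ≤ max (dist p y) (maxJump dist (y :: B)) := max_le_max le_rfl (MMJ_le_maxJump hyB)

theorem mmj_new_point_general {α : Type*} [MetricSpace α] (Ω : ℕ → α)
    (N : ℕ) (hN : 1 ≤ N)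
    (p : α)
    (r : ℕ) (hr : r ∈ Finset.Icc 1 N) :
    MMJ dist (Ω '' Set.Icc 1 N ∪ {p}) p (Ω r) =
      (Finset.Icc 1 N).inf' (Finset.nonempty_Icc.mpr hN)
        (fun t => max (dist p (Ω t))
          (MMJ dist (Ω '' Set.Icc 1 N) (Ω t) (Ω r))) := by
  have hΩ : ∀ t ∈ Finset.Icc 1 N, Ω t ∈ Ω '' Set.Icc 1 N :=
    fun t ht => ⟨t, by simpa using ht, rfl⟩
  refine le_antisymm (Finset.le_inf' _ _ fun t ht => ?_) (le_MMJ_union_singleton (hΩ r hr) ?_)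
  · exact MMJ_le_max_MMJ_of_subset Set.subset_union_left (Or.inr rfl) (hΩ t ht) (hΩ r hr)
  · rintro _ ⟨t, ht, rfl⟩
    exact Finset.inf'_le _ (by simpa using ht)

theorem mmj_new_point {α : Type*} [MetricSpace α] (Ω : ℕ → α)
    (N : ℕ) (hN : 1 ≤ N) (hinj : Set.InjOn Ω (Set.Icc 1 N))
    (p : α) (hp : p ∉ Ω '' Set.Icc 1 N)
    (r : ℕ) (hr : r ∈ Finset.Icc 1 N) :
    MMJ dist (Ω '' Set.Icc 1 N ∪ {p}) p (Ω r) =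
      (Finset.Icc 1 N).inf' (Finset.nonempty_Icc.mpr hN)
        (fun t => max (dist p (Ω t))
          (MMJ dist (Ω '' Set.Icc 1 N) (Ω t) (Ω r))) :=
  mmj_new_point_general Ω N hN p r hr
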